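/- arXiv:1901.09698 — 4 statements merged into one kernel-verified Lean document; each statement's English description precedes it below -/
import Mathlib

section
/- First moment of the refined isolated-node indicators: In the homogeneous binary MAG model M(n;L), for every node u ∈ {1,…,n} and every ℓ ∈ {0,1,…,L}, the probability that node u is isolated and S_L(u) = ℓ equals (1 − Γ(1)^ℓ Γ(0)^{L−ℓ})^{n−1} · C(L,ℓ) μ(1)^ℓ μ(0)^{L−ℓ}. Consequently, E[I_n^{(ℓ)}(L)] = n (1 − Γ(1)^ℓ Γ(0)^{L−ℓ})^{n−1} C(L,ℓ) μ(1)^ℓ μ(0)^{L−ℓ}. -/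
open MeasureTheory Filter

/-- Bernoulli measure on `Bool` with parameter `p` = probability of `true`. -/
noncomputable def bern (p : ℝ) : Measure Bool :=
  (Real.toNNReal p) • Measure.dirac true + (Real.toNNReal (1 - p)) • Measure.dirac false

/-- Uniform distribution on `[0,1]`. -/
noncomputable def unif01 : Measure ℝ := MeasureTheory.volume.restrict (Set.Icc (0:ℝ) 1)

/-- The probability space of the homogeneous binary MAG model `M(n;L)`:
i.i.d. Bernoulli attribute bits and, independently, i.i.d. Uniform(0,1) variables. -/
noncomputable def magMeasure (n L : ℕ) (p : ℝ) :
    Measure ((Fin n → Fin L → Bool) × (Fin n × Fin n → ℝ)) :=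
  (Measure.pi fun _ : Fin n => Measure.pi fun _ : Fin L => bern p).prod
    (Measure.pi fun _ : Fin n × Fin n => unif01)

/-- `Q_L(a,b) = ∏_{ℓ} q(a_ℓ, b_ℓ)`. -/
def QL {L : ℕ} (q : Bool → Bool → ℝ) (a b : Fin L → Bool) : ℝ :=
  ∏ ℓ : Fin L, q (a ℓ) (b ℓ)

/-- Distinct nodes `u, v` are adjacent iff `U(u,v) ≤ Q_L(A(u),A(v))`, where the uniform
variable attached to the unordered pair `{u,v}` is the one indexed by `(min u v, max u v)`. -/
def Adj {n L : ℕ} (q : Bool → Bool → ℝ)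
    (ω : (Fin n → Fin L → Bool) × (Fin n × Fin n → ℝ)) (u v : Fin n) : Prop :=
  u ≠ v ∧ ω.2 (min u v, max u v) ≤ QL q (ω.1 u) (ω.1 v)

/-- Node `u` is isolated if it is adjacent to no other node. -/
def Isolated {n L : ℕ} (q : Bool → Bool → ℝ)
    (ω : (Fin n → Fin L → Bool) × (Fin n × Fin n → ℝ)) (u : Fin n) : Prop :=
  ∀ v, ¬ Adj q ω u v

/-- `S_L(u)`: the number of attributes exhibited by node `u`. -/
def Scount {n L : ℕ} (ω : (Fin n → Fin L → Bool) × (Fin n × Fin n → ℝ)) (u : Fin n) : ℕ :=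
  (Finset.univ.filter fun ℓ : Fin L => ω.1 u ℓ = true).card

open scoped Classical in
/-- `I_n(L)`: the number of isolated nodes. -/
noncomputable def numIsolated {n L : ℕ} (q : Bool → Bool → ℝ)
    (ω : (Fin n → Fin L → Bool) × (Fin n × Fin n → ℝ)) : ℕ :=
  (Finset.univ.filter fun u : Fin n => Isolated q ω u).card

open scoped Classical in
/-- `I_n^{(k)}(L)`: the number of isolated nodes `u` with `S_L(u) = k`. -/
noncomputable def numIsolatedWith {n L : ℕ} (q : Bool → Bool → ℝ) (k : ℕ)
    (ω : (Fin n → Fin L → Bool) × (Fin n × Fin n → ℝ)) : ℕ :=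
  (Finset.univ.filter fun u : Fin n => Isolated q ω u ∧ Scount ω u = k).card

open scoped Classical in
/-- `ξ^{(k)}(u)`: the indicator that node `u` is isolated and `S_L(u) = k`. -/
noncomputable def xiInd {n L : ℕ} (q : Bool → Bool → ℝ) (k : ℕ)
    (ω : (Fin n → Fin L → Bool) × (Fin n × Fin n → ℝ)) (u : Fin n) : ℝ :=
  if Isolated q ω u ∧ Scount ω u = k then 1 else 0

/-- `Γ(a) = μ(0) q(a,0) + μ(1) q(a,1)`, with `μ(1) = μ1`, `μ(0) = 1 - μ1`. -/
def Gam (μ1 : ℝ) (q : Bool → Bool → ℝ) (a : Bool) : ℝ :=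
  (1 - μ1) * q a false + μ1 * q a true

/-- A scaling `L : ℕ → ℕ` is `ρ`-admissible if `L_n ~ ρ ln n` as `n → ∞`. -/
def Admissible (ρ : ℝ) (L : ℕ → ℕ) : Prop :=
  Asymptotics.IsEquivalent Filter.atTop (fun n => (L n : ℝ)) (fun n => ρ * Real.log n)

/-- `G(ν,μ) = (μ/ν)^ν ((1-μ)/(1-ν))^{1-ν}` (real powers; the conventions at `ν = 0,1`
agree with the continuous extension). -/
noncomputable def Gfun (ν μ : ℝ) : ℝ :=
  (μ / ν) ^ ν * ((1 - μ) / (1 - ν)) ^ (1 - ν)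

/-- `Q*_L(a) = E[Q_L(a,A)]`, `A` a vector of `L` i.i.d. Bernoulli(μ1) bits. -/
noncomputable def Qstar {L : ℕ} (μ1 : ℝ) (q : Bool → Bool → ℝ) (a : Fin L → Bool) : ℝ :=
  ∫ b, QL q a b ∂(Measure.pi fun _ : Fin L => bern μ1)

/-- `Q**_L(a,b) = E[Q_L(a,A) Q_L(b,A)]`. -/
noncomputable def Qstarstar {L : ℕ} (μ1 : ℝ) (q : Bool → Bool → ℝ) (a b : Fin L → Bool) : ℝ :=
  ∫ c, QL q a c * QL q b c ∂(Measure.pi fun _ : Fin L => bern μ1)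

/-- `Q̃_L(a,b) = Q*_L(a) + Q*_L(b) − Q**_L(a,b)`. -/
noncomputable def Qtilde {L : ℕ} (μ1 : ℝ) (q : Bool → Bool → ℝ) (a b : Fin L → Bool) : ℝ :=
  Qstar μ1 q a + Qstar μ1 q b - Qstarstar μ1 q a b

/-!
Condition on the attribute vectors. Once `A(u) = x` is fixed, the events
`U(u,v) > Q_L(x, A(v))` for `v ≠ u` involve pairwise different coordinates of `U` and of the
attributes, so they are independent, each with probability
`E[1 - Q_L(x, A)] = 1 - ∏ⱼ Γ(xⱼ) = 1 - Γ(1)^ℓ Γ(0)^(L-ℓ)` when `S_L(x) = ℓ`.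
Summing over the `C(L,ℓ)` vectors `x` with `S_L(x) = ℓ`, each of mass `μ(1)^ℓ μ(0)^(L-ℓ)`,
gives the probability; the expectation follows by linearity.
-/

/-- With the centre `a u` fixed, each leaf `a v`, `v ≠ u`, contributes an independent factor. -/
theorem Fintype.sum_prod_ne_eq_sum_pow {ι X R : Type*} [Fintype ι] [DecidableEq ι] [Fintype X]
    [CommSemiring R] (u : ι) (w h : X → R) (g : X → X → R) :
    ∑ a : ι → X, h (a u) * (∏ v : {v // v ≠ u}, g (a u) (a v)) * ∏ v, w (a v) =
      ∑ x, h x * (∑ y, g x y * w y) ^ (Fintype.card ι - 1) * w x := by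
  simp_rw [Fintype.prod_eq_mul_prod_subtype_ne _ u]
  calc _ = ∑ p : X × ({v // v ≠ u} → X),
        h p.1 * (∏ v, g p.1 (p.2 v)) * (w p.1 * ∏ v, w (p.2 v)) :=
      (Equiv.funSplitAt u X).sum_comp
        (fun p => h p.1 * (∏ v, g p.1 (p.2 v)) * (w p.1 * ∏ v, w (p.2 v)))
    _ = ∑ x, h x * (∏ _v : {v // v ≠ u}, ∑ y, g x y * w y) * w x := by
      rw [Fintype.sum_prod_type]
      refine Finset.sum_congr rfl fun x _ => ?_
      rw [Fintype.prod_sum, Finset.mul_sum, Finset.sum_mul]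
      refine Finset.sum_congr rfl fun f _ => ?_
      rw [Finset.prod_mul_distrib]
      ring
    _ = _ := by
      simp [Fintype.card_subtype_compl]

theorem injective_min_max_of_ne {α : Type*} [LinearOrder α] (u : α) :
    Function.Injective fun v : {v // v ≠ u} => (min u v.1, max u v.1) := by
  rintro ⟨v, hv⟩ ⟨w, hw⟩ h
  simp only [Prod.mk.injEq] at h
  ext
  rcases le_total u v with huv | huv <;> rcases le_total u w with huw | huw <;>
    simp_all

theorem MeasureTheory.Measure.pi_setOf_forall_comp_mem {ι κ α : Type*} [Fintype ι] [Fintype κ]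
    [MeasurableSpace α] (μ : ι → Measure α) [∀ i, IsProbabilityMeasure (μ i)]
    {e : κ → ι} (he : Function.Injective e) (s : κ → Set α) :
    Measure.pi μ {x | ∀ k, x (e k) ∈ s k} = ∏ k, μ (e k) (s k) := by
  classical
  have hpi : {x : ι → α | ∀ k, x (e k) ∈ s k} =
      Set.univ.pi fun i => {a | ∀ k, e k = i → a ∈ s k} := by
    ext x
    simpa using ⟨fun h i k hk => hk ▸ h k, fun h k => h _ k rfl⟩
  rw [hpi, Measure.pi_pi]
  refine (Fintype.prod_of_injective e he _ _ (fun i hi => ?_) fun k => ?_).symm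
  · have : {a : α | ∀ k, e k = i → a ∈ s k} = Set.univ := by
      ext a; simp only [Set.mem_range, not_exists] at hi; simp [hi]
    rw [this, measure_univ]
  · congr 1
    ext a
    simp [he.eq_iff]

theorem integral_card_filter_eq_sum_measureReal {Ω ι : Type*} [MeasurableSpace Ω]
    {μ : Measure Ω} [IsFiniteMeasure μ] [Fintype ι] (p : ι → Ω → Prop)
    [∀ i ω, Decidable (p i ω)] (hp : ∀ i, MeasurableSet {ω | p i ω}) :
    ∫ ω, ((Finset.univ.filter fun i => p i ω).card : ℝ) ∂μ =
      ∑ i, μ.real {ω | p i ω} := by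
  simp_rw [Finset.card_filter, Nat.cast_sum, Nat.cast_ite, Nat.cast_one, Nat.cast_zero]
  have hind : ∀ i ω, (if p i ω then (1 : ℝ) else 0) = {ω | p i ω}.indicator 1 ω := by
    intro i ω; simp [Set.indicator]
  simp_rw [hind]
  rw [integral_finsetSum _ fun i _ => (integrable_const 1).indicator (hp i)]
  simp_rw [integral_indicator_one (hp _)]

instance isFiniteMeasure_bern (p : ℝ) : IsFiniteMeasure (bern p) := by
  unfold bern; infer_instance

theorem bern_singleton_true (p : ℝ) : bern p {true} = ENNReal.ofReal p := by
  simp [bern, ENNReal.ofReal]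

theorem bern_singleton_false (p : ℝ) : bern p {false} = ENNReal.ofReal (1 - p) := by
  simp [bern, ENNReal.ofReal]

theorem isProbabilityMeasure_bern {p : ℝ} (h0 : 0 ≤ p) (h1 : p ≤ 1) :
    IsProbabilityMeasure (bern p) := by
  constructor
  rw [← Finset.coe_univ, ← sum_measure_singleton, Fintype.sum_bool, bern_singleton_true,
    bern_singleton_false, ← ENNReal.ofReal_add h0 (by linarith)]
  simp

theorem integral_bern {p : ℝ} (h0 : 0 ≤ p) (h1 : p ≤ 1) (f : Bool → ℝ) :
    ∫ b, f b ∂bern p = (1 - p) * f false + p * f true := by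
  rw [integral_fintype .of_finite, Fintype.sum_bool, measureReal_def, measureReal_def,
    bern_singleton_true, bern_singleton_false, ENNReal.toReal_ofReal h0,
    ENNReal.toReal_ofReal (by linarith), smul_eq_mul, smul_eq_mul]
  ring

instance isProbabilityMeasure_unif01 : IsProbabilityMeasure unif01 := by
  constructor
  simp [unif01]

theorem unif01_Ioi {t : ℝ} (h0 : 0 ≤ t) :
    unif01 (Set.Ioi t) = ENNReal.ofReal (1 - t) := by
  have : Set.Ioi t ∩ Set.Icc 0 1 = Set.Ioc t 1 := by
    ext x; simp only [Set.mem_inter_iff, Set.mem_Ioi, Set.mem_Icc, Set.mem_Ioc]; grind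
  rw [unif01, Measure.restrict_apply measurableSet_Ioi, this, Real.volume_Ioc]

def countTrue {L : ℕ} (x : Fin L → Bool) : ℕ := (Finset.univ.filter fun j => x j = true).card

theorem prod_comp_eq_pow_countTrue_mul_pow {M : Type*} [CommMonoid M] {L : ℕ} (f : Bool → M)
    (x : Fin L → Bool) :
    ∏ j, f (x j) = f true ^ countTrue x * f false ^ (L - countTrue x) := by
  have hcard : (Finset.univ.filter fun j => ¬ x j = true).card = L - countTrue x := by
    have := Finset.card_filter_add_card_filter_not (s := Finset.univ) fun j => x j = true
    rw [Finset.card_univ, Fintype.card_fin] at this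
    rw [countTrue]; omega
  rw [← Finset.prod_filter_mul_prod_filter_not Finset.univ fun j => x j = true,
    Finset.prod_congr rfl fun j hj => congrArg f (Finset.mem_filter.1 hj).2,
    Finset.prod_congr rfl fun j hj => congrArg f (Bool.eq_false_iff.2 (Finset.mem_filter.1 hj).2),
    Finset.prod_const, Finset.prod_const, hcard, countTrue]

theorem pi_bern_singleton {L : ℕ} (p : ℝ) (x : Fin L → Bool) :
    (Measure.pi fun _ : Fin L => bern p) {x} =
      ENNReal.ofReal p ^ countTrue x * ENNReal.ofReal (1 - p) ^ (L - countTrue x) := by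
  rw [Measure.pi_singleton, prod_comp_eq_pow_countTrue_mul_pow (fun b => bern p {b}),
    bern_singleton_true, bern_singleton_false]

theorem Qstar_eq_prod_Gam {L : ℕ} {μ1 : ℝ} (h0 : 0 ≤ μ1) (h1 : μ1 ≤ 1)
    (q : Bool → Bool → ℝ) (a : Fin L → Bool) : Qstar μ1 q a = ∏ j, Gam μ1 q (a j) := by
  rw [Qstar]
  unfold QL
  rw [integral_fintype_prod_eq_prod (fun j b => q (a j) b)]
  simp only [integral_bern h0 h1, Gam]

theorem card_filter_countTrue_eq_choose (L ℓ : ℕ) :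
    (Finset.univ.filter fun x : Fin L → Bool => countTrue x = ℓ).card = L.choose ℓ := by
  have : L.choose ℓ = (Finset.univ.powersetCard ℓ : Finset (Finset (Fin L))).card := by simp
  rw [this]
  refine Finset.card_nbij' (fun x => Finset.univ.filter fun j => x j = true)
    (fun s j => decide (j ∈ s)) (fun x hx => ?_) (fun s hs => ?_) (fun x _ => ?_) (fun s _ => ?_)
  · exact Finset.mem_powersetCard.2
      ⟨Finset.subset_univ _, (by simpa using hx : countTrue x = ℓ)⟩
  · refine Finset.mem_coe.2 (Finset.mem_filter.2 ⟨Finset.mem_univ _, ?_⟩)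
    simpa [countTrue] using hs
  · ext j; simp
  · ext j; simp

section MAG

variable {n L : ℕ} {μ1 : ℝ} {q : Bool → Bool → ℝ}

theorem Scount_eq_countTrue (ω : (Fin n → Fin L → Bool) × (Fin n × Fin n → ℝ))
    (u : Fin n) : Scount ω u = countTrue (ω.1 u) := rfl

theorem measurableSet_isolated_and_scount (q : Bool → Bool → ℝ) (u : Fin n) (ℓ : ℕ) :
    MeasurableSet {ω : (Fin n → Fin L → Bool) × (Fin n × Fin n → ℝ) |
      Isolated q ω u ∧ Scount ω u = ℓ} := by
  have hadj : ∀ v, MeasurableSet {ω : (Fin n → Fin L → Bool) × (Fin n × Fin n → ℝ) |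
      Adj q ω u v} := fun v =>
    (MeasurableSet.const _).inter <| measurableSet_le (by fun_prop) <|
      (measurable_of_countable fun a : Fin n → Fin L → Bool => QL q (a u) (a v)).comp
        measurable_fst
  have hcount : MeasurableSet {a : Fin n → Fin L → Bool | countTrue (a u) = ℓ} :=
    (Set.toFinite _).measurableSet
  convert (MeasurableSet.iInter fun v => (hadj v).compl).inter (measurable_fst hcount)
  ext ω
  simp [Isolated, Scount_eq_countTrue]

theorem QL_nonneg (hq0 : ∀ a b, 0 ≤ q a b) (a b : Fin L → Bool) : 0 ≤ QL q a b :=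
  Finset.prod_nonneg fun _ _ => hq0 _ _

theorem QL_le_one (hq0 : ∀ a b, 0 ≤ q a b) (hq1 : ∀ a b, q a b ≤ 1) (a b : Fin L → Bool) :
    QL q a b ≤ 1 :=
  Finset.prod_le_one (fun _ _ => hq0 _ _) fun _ _ => hq1 _ _

theorem Gam_nonneg (h0 : 0 ≤ μ1) (h1 : μ1 ≤ 1) (hq0 : ∀ a b, 0 ≤ q a b) (a : Bool) :
    0 ≤ Gam μ1 q a := by
  have := hq0 a false; have := hq0 a true
  unfold Gam; nlinarith

theorem Gam_le_one (h0 : 0 ≤ μ1) (h1 : μ1 ≤ 1) (hq1 : ∀ a b, q a b ≤ 1) (a : Bool) :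
    Gam μ1 q a ≤ 1 := by
  have := hq1 a false; have := hq1 a true
  unfold Gam; nlinarith

theorem one_sub_Gam_pow_mul_pow_nonneg (h0 : 0 ≤ μ1) (h1 : μ1 ≤ 1)
    (hq0 : ∀ a b, 0 ≤ q a b) (hq1 : ∀ a b, q a b ≤ 1) (k m : ℕ) :
    0 ≤ 1 - Gam μ1 q true ^ k * Gam μ1 q false ^ m :=
  sub_nonneg.2 <| mul_le_one₀ (pow_le_one₀ (Gam_nonneg h0 h1 hq0 _) (Gam_le_one h0 h1 hq1 _))
    (pow_nonneg (Gam_nonneg h0 h1 hq0 _) _)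
    (pow_le_one₀ (Gam_nonneg h0 h1 hq0 _) (Gam_le_one h0 h1 hq1 _))

theorem lintegral_ofReal_one_sub_QL (h0 : 0 ≤ μ1) (h1 : μ1 ≤ 1) (hq0 : ∀ a b, 0 ≤ q a b)
    (hq1 : ∀ a b, q a b ≤ 1) (x : Fin L → Bool) :
    ∫⁻ y, ENNReal.ofReal (1 - QL q x y) ∂(Measure.pi fun _ : Fin L => bern μ1) =
      ENNReal.ofReal (1 - Gam μ1 q true ^ countTrue x * Gam μ1 q false ^ (L - countTrue x)) := by
  have := isProbabilityMeasure_bern h0 h1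
  rw [← ofReal_integral_eq_lintegral_ofReal .of_finite
      (ae_of_all _ fun y => sub_nonneg.2 (QL_le_one hq0 hq1 x y)),
    integral_sub (integrable_const 1) .of_finite, integral_const, probReal_univ, one_smul,
    ← Qstar, Qstar_eq_prod_Gam h0 h1, prod_comp_eq_pow_countTrue_mul_pow]

theorem pi_unif01_preimage_isolated_and_scount (hq0 : ∀ a b, 0 ≤ q a b) (u : Fin n) (ℓ : ℕ)
    (a : Fin n → Fin L → Bool) :
    (Measure.pi fun _ : Fin n × Fin n => unif01)
        (Prod.mk a ⁻¹' {ω | Isolated q ω u ∧ Scount ω u = ℓ}) =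
      (if countTrue (a u) = ℓ then 1 else 0) *
        ∏ v : {v // v ≠ u}, ENNReal.ofReal (1 - QL q (a u) (a v)) := by
  by_cases h : countTrue (a u) = ℓ
  · have hsec : Prod.mk a ⁻¹' {ω | Isolated q ω u ∧ Scount ω u = ℓ} =
        {U | ∀ v : {v // v ≠ u}, U (min u v.1, max u v.1) ∈ Set.Ioi (QL q (a u) (a v))} := by
      ext U
      simp only [Set.mem_preimage, Set.mem_ofPred_eq, Isolated, Adj, Scount_eq_countTrue, h,
        and_true, not_and, not_le, Set.mem_Ioi]
      exact ⟨fun H v => H v.1 (Ne.symm v.2), fun H v hv => H ⟨v, Ne.symm hv⟩⟩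
    rw [hsec, Measure.pi_setOf_forall_comp_mem _ (injective_min_max_of_ne u), if_pos h, one_mul]
    simp_rw [unif01_Ioi (QL_nonneg hq0 _ _)]
  · rw [if_neg h, zero_mul]
    convert measure_empty (μ := Measure.pi fun _ : Fin n × Fin n => unif01)
    ext U
    simp [Scount_eq_countTrue, h]

theorem magMeasure_isolated_and_scount (h0 : 0 ≤ μ1) (h1 : μ1 ≤ 1)
    (hq0 : ∀ a b, 0 ≤ q a b) (hq1 : ∀ a b, q a b ≤ 1) (u : Fin n) (ℓ : ℕ) :
    magMeasure n L μ1 {ω | Isolated q ω u ∧ Scount ω u = ℓ} =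
      ENNReal.ofReal ((1 - Gam μ1 q true ^ ℓ * Gam μ1 q false ^ (L - ℓ)) ^ (n - 1) *
        (L.choose ℓ) * μ1 ^ ℓ * (1 - μ1) ^ (L - ℓ)) := by
  set P := Measure.pi fun _ : Fin L => bern μ1
  set K := 1 - Gam μ1 q true ^ ℓ * Gam μ1 q false ^ (L - ℓ)
  have hK : 0 ≤ K := one_sub_Gam_pow_mul_pow_nonneg h0 h1 hq0 hq1 ℓ (L - ℓ)
  calc magMeasure n L μ1 {ω | Isolated q ω u ∧ Scount ω u = ℓ}
      = ∑ a : Fin n → Fin L → Bool, (if countTrue (a u) = ℓ then 1 else 0) *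
          (∏ v : {v // v ≠ u}, ENNReal.ofReal (1 - QL q (a u) (a v))) * ∏ v, P {a v} := by
        rw [magMeasure, Measure.prod_apply (measurableSet_isolated_and_scount q u ℓ),
          lintegral_fintype]
        refine Finset.sum_congr rfl fun a _ => ?_
        rw [pi_unif01_preimage_isolated_and_scount hq0, Measure.pi_singleton]
    _ = ∑ x : Fin L → Bool, (if countTrue x = ℓ then 1 else 0) *
          (∫⁻ y, ENNReal.ofReal (1 - QL q x y) ∂P) ^ (n - 1) * P {x} := by
        rw [Fintype.sum_prod_ne_eq_sum_pow u (fun y => P {y})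
          (fun x => if countTrue x = ℓ then 1 else 0) fun x y => ENNReal.ofReal (1 - QL q x y),
          Fintype.card_fin]
        simp_rw [lintegral_fintype]
    _ = ∑ x ∈ Finset.univ.filter fun x : Fin L → Bool => countTrue x = ℓ,
          ENNReal.ofReal K ^ (n - 1) *
            (ENNReal.ofReal μ1 ^ ℓ * ENNReal.ofReal (1 - μ1) ^ (L - ℓ)) := by
        rw [Finset.sum_filter]
        refine Finset.sum_congr rfl fun x _ => ?_
        split_ifs with hx
        · rw [one_mul, lintegral_ofReal_one_sub_QL h0 h1 hq0 hq1, pi_bern_singleton, hx]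
        · rw [zero_mul, zero_mul]
    _ = _ := by
        rw [Finset.sum_const, card_filter_countTrue_eq_choose, nsmul_eq_mul,
          ENNReal.ofReal_mul' (by positivity), ENNReal.ofReal_mul' (by positivity),
          ENNReal.ofReal_mul' (by positivity),
          ENNReal.ofReal_pow hK, ENNReal.ofReal_pow h0, ENNReal.ofReal_pow (by linarith),
          ENNReal.ofReal_natCast]
        ring

end MAG

theorem mag_first_moment_refined_isolated_general
    (n L : ℕ)
    (μ1 : ℝ) (hμ1 : 0 < μ1) (hμ1' : μ1 < 1)
    (q : Bool → Bool → ℝ) (hq : ∀ a b, 0 < q a b ∧ q a b < 1)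
    (u : Fin n) (ℓ : ℕ) :
    magMeasure n L μ1 {ω | Isolated q ω u ∧ Scount ω u = ℓ}
      = ENNReal.ofReal
          ((1 - Gam μ1 q true ^ ℓ * Gam μ1 q false ^ (L - ℓ)) ^ (n - 1) *
            (L.choose ℓ) * μ1 ^ ℓ * (1 - μ1) ^ (L - ℓ)) ∧
    ∫ ω, (numIsolatedWith q ℓ ω : ℝ) ∂(magMeasure n L μ1)
      = n * ((1 - Gam μ1 q true ^ ℓ * Gam μ1 q false ^ (L - ℓ)) ^ (n - 1) *
          (L.choose ℓ) * μ1 ^ ℓ * (1 - μ1) ^ (L - ℓ)) := by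
  have hq0 : ∀ a b, 0 ≤ q a b := fun a b => (hq a b).1.le
  have hq1 : ∀ a b, q a b ≤ 1 := fun a b => (hq a b).2.le
  have hprob (v : Fin n) := magMeasure_isolated_and_scount hμ1.le hμ1'.le hq0 hq1 v ℓ (L := L)
  refine ⟨hprob u, ?_⟩
  have hC : 0 ≤ (1 - Gam μ1 q true ^ ℓ * Gam μ1 q false ^ (L - ℓ)) ^ (n - 1) *
      (L.choose ℓ) * μ1 ^ ℓ * (1 - μ1) ^ (L - ℓ) :=
    mul_nonneg (mul_nonneg (mul_nonneg
      (pow_nonneg (one_sub_Gam_pow_mul_pow_nonneg hμ1.le hμ1'.le hq0 hq1 _ _) _)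
      (Nat.cast_nonneg _)) (pow_nonneg hμ1.le _)) (pow_nonneg (sub_nonneg.2 hμ1'.le) _)
  have : IsFiniteMeasure (magMeasure n L μ1) := by unfold magMeasure; infer_instance
  classical
  unfold numIsolatedWith
  rw [integral_card_filter_eq_sum_measureReal (fun v ω => Isolated q ω v ∧ Scount ω v = ℓ)
    fun v => measurableSet_isolated_and_scount q v ℓ]
  simp [measureReal_def, hprob, ENNReal.toReal_ofReal hC]

theorem mag_first_moment_refined_isolated
    (n L : ℕ) (hn : 2 ≤ n) (hL : 1 ≤ L)
    (μ1 : ℝ) (hμ1 : 0 < μ1) (hμ1' : μ1 < 1)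
    (q : Bool → Bool → ℝ) (hq : ∀ a b, 0 < q a b ∧ q a b < 1)
    (hqsym : q false true = q true false)
    (u : Fin n) (ℓ : ℕ) (hℓ : ℓ ≤ L) :
    magMeasure n L μ1 {ω | Isolated q ω u ∧ Scount ω u = ℓ}
      = ENNReal.ofReal
          ((1 - Gam μ1 q true ^ ℓ * Gam μ1 q false ^ (L - ℓ)) ^ (n - 1) *
            (L.choose ℓ) * μ1 ^ ℓ * (1 - μ1) ^ (L - ℓ)) ∧
    ∫ ω, (numIsolatedWith q ℓ ω : ℝ) ∂(magMeasure n L μ1)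
      = n * ((1 - Gam μ1 q true ^ ℓ * Gam μ1 q false ^ (L - ℓ)) ^ (n - 1) *
          (L.choose ℓ) * μ1 ^ ℓ * (1 - μ1) ^ (L - ℓ)) :=
  mag_first_moment_refined_isolated_general n L μ1 hμ1 hμ1' q hq u ℓ
end

section
/- Technical limit lemma A: Let 0 < Γ(0), Γ(1) < 1, let ρ > 0, and let L : ℕ → ℕ be a ρ-admissible scaling. For any sequence ν_n in [0,1] with ν_n → ν, the sequence (1 − (Γ(1)^{ν_n} Γ(0)^{1−ν_n})^{L_n})^{n−1} converges, as n → ∞, to 0 if 1 + ρ ln(Γ(1)^ν Γ(0)^{1−ν}) > 0, and to 1 if 1 + ρ ln(Γ(1)^ν Γ(0)^{1−ν}) < 0. -/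
open MeasureTheory Filter

/-! Write `c_n = Γ(1)^{ν_n} Γ(0)^{1-ν_n} ≤ 1` and `t_n = c_n ^ L_n`. Since `L_n ~ ρ ln n`,
`(n - 1) t_n = n ^ (1 + ρ ln c + o(1))`, so `(n - 1) t_n` tends to `∞` or to `0` according to
the sign of `1 + ρ ln c`. In the first case `(1 - t_n)^{n-1} ≤ exp (-(n - 1) t_n) → 0`; in the
second Bernoulli's inequality `1 - (n - 1) t_n ≤ (1 - t_n)^{n-1} ≤ 1` squeezes it to `1`. -/

open Real Topology Asymptotics

section OneSubPow

variable {ι : Type*} {l : Filter ι} {t : ι → ℝ} {m : ι → ℕ}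

theorem tendsto_one_sub_pow_zero_of_mul_tendsto_atTop (ht : ∀ i, t i ≤ 1)
    (h : Tendsto (fun i => (m i : ℝ) * t i) l atTop) :
    Tendsto (fun i => (1 - t i) ^ m i) l (𝓝 0) := by
  have hexp : Tendsto (fun i => exp (-((m i : ℝ) * t i))) l (𝓝 0) :=
    tendsto_exp_atBot.comp (tendsto_neg_atTop_atBot.comp h)
  refine squeeze_zero (fun i => pow_nonneg (sub_nonneg.2 (ht i)) _) (fun i => ?_) hexp
  calc (1 - t i) ^ m i ≤ exp (-t i) ^ m i :=
        pow_le_pow_left₀ (sub_nonneg.2 (ht i)) (one_sub_le_exp_neg _) _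
    _ = exp (-((m i : ℝ) * t i)) := by rw [← exp_nat_mul, mul_neg]

theorem tendsto_one_sub_pow_one_of_mul_tendsto_zero (ht₀ : ∀ i, 0 ≤ t i) (ht₁ : ∀ i, t i ≤ 1)
    (h : Tendsto (fun i => (m i : ℝ) * t i) l (𝓝 0)) :
    Tendsto (fun i => (1 - t i) ^ m i) l (𝓝 1) := by
  have hlow : Tendsto (fun i => 1 - (m i : ℝ) * t i) l (𝓝 1) := by
    simpa using tendsto_const_nhds.sub h
  refine tendsto_of_tendsto_of_tendsto_of_le_of_le hlow tendsto_const_nhds (fun i => ?_)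
    (fun i => pow_le_one₀ (sub_nonneg.2 (ht₁ i)) (by linarith [ht₀ i]))
  simpa [sub_eq_add_neg] using one_add_mul_le_pow (a := -t i) (by linarith [ht₁ i, ht₀ i]) (m i)

end OneSubPow

section LogRatio

variable {ι : Type*} {l : Filter ι} {f s : ι → ℝ} {a : ℝ}

theorem tendsto_atTop_of_tendsto_div_pos (hs : Tendsto s l atTop)
    (h : Tendsto (fun i => f i / s i) l (𝓝 a)) (ha : 0 < a) : Tendsto f l atTop :=
  (h.pos_mul_atTop ha hs).congr' <| (hs.eventually_gt_atTop 0).mono fun _ hi =>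
    div_mul_cancel₀ _ hi.ne'

theorem tendsto_atBot_of_tendsto_div_neg (hs : Tendsto s l atTop)
    (h : Tendsto (fun i => f i / s i) l (𝓝 a)) (ha : a < 0) : Tendsto f l atBot :=
  (h.neg_mul_atTop ha hs).congr' <| (hs.eventually_gt_atTop 0).mono fun _ hi =>
    div_mul_cancel₀ _ hi.ne'

theorem tendsto_atTop_of_tendsto_log_div_pos (hf : ∀ᶠ i in l, 0 < f i)
    (hs : Tendsto s l atTop) (h : Tendsto (fun i => log (f i) / s i) l (𝓝 a)) (ha : 0 < a) :
    Tendsto f l atTop :=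
  (tendsto_exp_atTop.comp (tendsto_atTop_of_tendsto_div_pos hs h ha)).congr' <|
    hf.mono fun _ hi => exp_log hi

theorem tendsto_zero_of_tendsto_log_div_neg (hf : ∀ᶠ i in l, 0 < f i)
    (hs : Tendsto s l atTop) (h : Tendsto (fun i => log (f i) / s i) l (𝓝 a)) (ha : a < 0) :
    Tendsto f l (𝓝 0) :=
  (tendsto_exp_atBot.comp (tendsto_atBot_of_tendsto_div_neg hs h ha)).congr' <|
    hf.mono fun _ hi => exp_log hi

end LogRatio

theorem tendsto_log_natCast : Tendsto (fun n : ℕ => log n) atTop atTop :=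
  tendsto_log_atTop.comp tendsto_natCast_atTop_atTop

theorem tendsto_log_sub_one_div_log :
    Tendsto (fun n : ℕ => log ((n - 1 : ℕ) : ℝ) / log n) atTop (𝓝 1) := by
  have hdiff : Tendsto (fun n : ℕ => log n - log ((n - 1 : ℕ) : ℝ)) atTop (𝓝 0) := by
    refine (tendsto_log_nat_add_one_sub_log.comp (tendsto_sub_atTop_nat 1)).congr' ?_
    filter_upwards [eventually_ge_atTop 1] with n hn
    simp [Nat.cast_sub hn]
  have h := tendsto_const_nhds (x := (1 : ℝ)) |>.sub (hdiff.div_atTop tendsto_log_natCast)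
  rw [sub_zero] at h
  refine h.congr' ?_
  filter_upwards [tendsto_log_natCast.eventually_gt_atTop 0] with n hn
  field_simp
  ring

theorem Admissible.tendsto_div_log {ρ : ℝ} {L : ℕ → ℕ} (hL : Admissible ρ L) :
    Tendsto (fun n => (L n : ℝ) / log n) atTop (𝓝 ρ) := by
  refine (hL.div IsEquivalent.refl).symm.tendsto_nhds (tendsto_const_nhds.congr' ?_)
  filter_upwards [tendsto_log_natCast.eventually_gt_atTop 0] with n hn
  simp [hn.ne']

theorem Admissible.tendsto_log_mul_pow_div_log {ρ x : ℝ} {L : ℕ → ℕ} (hL : Admissible ρ L)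
    {c : ℕ → ℝ} (hc : ∀ n, 0 < c n) (hlim : Tendsto (fun n => log (c n)) atTop (𝓝 x)) :
    Tendsto (fun n => log (((n - 1 : ℕ) : ℝ) * c n ^ L n) / log n) atTop (𝓝 (1 + ρ * x)) := by
  refine (tendsto_log_sub_one_div_log.add (hL.tendsto_div_log.mul hlim)).congr' ?_
  filter_upwards [eventually_ge_atTop 2] with n hn
  have hn1 : ((n - 1 : ℕ) : ℝ) ≠ 0 := Nat.cast_ne_zero.2 (by omega)
  rw [log_mul hn1 (pow_ne_zero _ (hc n).ne'), log_pow]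
  ring

theorem technical_limit_lemma_A_general
    (Γ0 Γ1 : ℝ) (hΓ0 : Γ0 ∈ Set.Ioo (0:ℝ) 1) (hΓ1 : Γ1 ∈ Set.Ioo (0:ℝ) 1)
    (ρ : ℝ) (L : ℕ → ℕ) (hL : Admissible ρ L)
    (ν : ℝ) (νseq : ℕ → ℝ) (hνseq : ∀ n, νseq n ∈ Set.Icc (0:ℝ) 1)
    (hνlim : Tendsto νseq atTop (nhds ν)) :
    (1 + ρ * Real.log (Γ1 ^ ν * Γ0 ^ (1 - ν)) > 0 →
      Tendsto (fun n => (1 - (Γ1 ^ νseq n * Γ0 ^ (1 - νseq n)) ^ L n) ^ (n - 1))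
        atTop (nhds 0)) ∧
    (1 + ρ * Real.log (Γ1 ^ ν * Γ0 ^ (1 - ν)) < 0 →
      Tendsto (fun n => (1 - (Γ1 ^ νseq n * Γ0 ^ (1 - νseq n)) ^ L n) ^ (n - 1))
        atTop (nhds 1)) := by
  obtain ⟨hΓ0pos, hΓ0lt⟩ := hΓ0
  obtain ⟨hΓ1pos, hΓ1lt⟩ := hΓ1
  set c : ℕ → ℝ := fun n => Γ1 ^ νseq n * Γ0 ^ (1 - νseq n)
  have hc_pos : ∀ n, 0 < c n := fun n => by positivity
  have hc_le : ∀ n, c n ≤ 1 := fun n =>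
    mul_le_one₀ (rpow_le_one hΓ1pos.le hΓ1lt.le (hνseq n).1) (by positivity)
      (rpow_le_one hΓ0pos.le hΓ0lt.le (sub_nonneg.2 (hνseq n).2))
  have hlog_c : Tendsto (fun n => log (c n)) atTop (𝓝 (log (Γ1 ^ ν * Γ0 ^ (1 - ν)))) :=
    ((tendsto_const_nhds.rpow hνlim (Or.inl hΓ1pos.ne')).mul
      (tendsto_const_nhds.rpow (tendsto_const_nhds.sub hνlim) (Or.inl hΓ0pos.ne'))).log
      (by positivity)
  have hratio := hL.tendsto_log_mul_pow_div_log hc_pos hlog_c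
  have hprod_pos : ∀ᶠ n in atTop, 0 < ((n - 1 : ℕ) : ℝ) * c n ^ L n := by
    filter_upwards [eventually_ge_atTop 2] with n hn
    exact mul_pos (Nat.cast_pos.2 (by omega)) (pow_pos (hc_pos n) _)
  have ht₀ : ∀ n, 0 ≤ c n ^ L n := fun n => pow_nonneg (hc_pos n).le _
  have ht₁ : ∀ n, c n ^ L n ≤ 1 := fun n => pow_le_one₀ (hc_pos n).le (hc_le n)
  refine ⟨fun hpos => ?_, fun hneg => ?_⟩
  · exact tendsto_one_sub_pow_zero_of_mul_tendsto_atTop ht₁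
      (tendsto_atTop_of_tendsto_log_div_pos hprod_pos tendsto_log_natCast hratio hpos)
  · exact tendsto_one_sub_pow_one_of_mul_tendsto_zero ht₀ ht₁
      (tendsto_zero_of_tendsto_log_div_neg hprod_pos tendsto_log_natCast hratio hneg)

theorem technical_limit_lemma_A
    (Γ0 Γ1 : ℝ) (hΓ0 : Γ0 ∈ Set.Ioo (0:ℝ) 1) (hΓ1 : Γ1 ∈ Set.Ioo (0:ℝ) 1)
    (ρ : ℝ) (hρ : 0 < ρ) (L : ℕ → ℕ) (hL : Admissible ρ L)
    (ν : ℝ) (νseq : ℕ → ℝ) (hνseq : ∀ n, νseq n ∈ Set.Icc (0:ℝ) 1)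
    (hνlim : Tendsto νseq atTop (nhds ν)) :
    (1 + ρ * Real.log (Γ1 ^ ν * Γ0 ^ (1 - ν)) > 0 →
      Tendsto (fun n => (1 - (Γ1 ^ νseq n * Γ0 ^ (1 - νseq n)) ^ L n) ^ (n - 1))
        atTop (nhds 0)) ∧
    (1 + ρ * Real.log (Γ1 ^ ν * Γ0 ^ (1 - ν)) < 0 →
      Tendsto (fun n => (1 - (Γ1 ^ νseq n * Γ0 ^ (1 - νseq n)) ^ L n) ^ (n - 1))
        atTop (nhds 1)) :=
  technical_limit_lemma_A_general Γ0 Γ1 hΓ0 hΓ1 ρ L hL ν νseq hνseq hνlim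
end

section
/- Strengthened technical limit: Let 0 < Γ(0), Γ(1) < 1, let ρ > 0, and let L : ℕ → ℕ be a ρ-admissible scaling. For any sequence ν_n in [0,1] with ν_n → ν, if 1 + ρ ln(Γ(1)^ν Γ(0)^{1−ν}) > 0 then n (1 − (Γ(1)^{ν_n} Γ(0)^{1−ν_n})^{L_n})^{n−1} → 0 as n → ∞. -/
open MeasureTheory Filter

theorem technical_limit_lemma_A_strengthened
    (Γ0 Γ1 : ℝ) (hΓ0 : Γ0 ∈ Set.Ioo (0:ℝ) 1) (hΓ1 : Γ1 ∈ Set.Ioo (0:ℝ) 1)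
    (ρ : ℝ) (hρ : 0 < ρ) (L : ℕ → ℕ) (hL : Admissible ρ L)
    (ν : ℝ) (νseq : ℕ → ℝ) (hνseq : ∀ n, νseq n ∈ Set.Icc (0:ℝ) 1)
    (hνlim : Tendsto νseq atTop (nhds ν))
    (hpos : 1 + ρ * Real.log (Γ1 ^ ν * Γ0 ^ (1 - ν)) > 0) :
    Tendsto (fun n : ℕ => (n : ℝ) * (1 - (Γ1 ^ νseq n * Γ0 ^ (1 - νseq n)) ^ L n) ^ (n - 1))
      atTop (nhds 0) := by
  obtain ⟨hΓ0p, hΓ0l⟩ := hΓ0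
  obtain ⟨hΓ1p, hΓ1l⟩ := hΓ1
  set g : ℕ → ℝ := fun n => Γ1 ^ νseq n * Γ0 ^ (1 - νseq n) with hgdef
  have hgpos : ∀ n, 0 < g n := fun n =>
    mul_pos (Real.rpow_pos_of_pos hΓ1p _) (Real.rpow_pos_of_pos hΓ0p _)
  have hgle1 : ∀ n, g n ≤ 1 := by
    intro n
    have h1 : Γ1 ^ νseq n ≤ 1 := Real.rpow_le_one hΓ1p.le hΓ1l.le (hνseq n).1
    have h2 : Γ0 ^ (1 - νseq n) ≤ 1 :=
      Real.rpow_le_one hΓ0p.le hΓ0l.le (by linarith [(hνseq n).2])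
    have h3 : (0:ℝ) < Γ0 ^ (1 - νseq n) := Real.rpow_pos_of_pos hΓ0p _
    have h4 : (0:ℝ) < Γ1 ^ νseq n := Real.rpow_pos_of_pos hΓ1p _
    show Γ1 ^ νseq n * Γ0 ^ (1 - νseq n) ≤ 1
    nlinarith
  have hν : ν ∈ Set.Icc (0:ℝ) 1 :=
    isClosed_Icc.mem_of_tendsto hνlim (Filter.Eventually.of_forall hνseq)
  set c : ℝ := ν * Real.log Γ1 + (1 - ν) * Real.log Γ0 with hcdef
  have hlogΓ1 : Real.log Γ1 < 0 := Real.log_neg hΓ1p hΓ1l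
  have hlogΓ0 : Real.log Γ0 < 0 := Real.log_neg hΓ0p hΓ0l
  have hceq : Real.log (Γ1 ^ ν * Γ0 ^ (1 - ν)) = c := by
    rw [Real.log_mul (Real.rpow_pos_of_pos hΓ1p _).ne' (Real.rpow_pos_of_pos hΓ0p _).ne',
      Real.log_rpow hΓ1p, Real.log_rpow hΓ0p]
  have hc1 : 1 + ρ * c > 0 := by rw [hceq] at hpos; exact hpos
  have hclt : c < 0 := by
    obtain ⟨hν0, hν1⟩ := hν
    rcases eq_or_lt_of_le hν0 with h | h
    · simp only [hcdef, ← h]; nlinarith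
    · nlinarith
  set a : ℝ := -(ρ * c) with hadef
  have ha0 : 0 < a := by simp only [hadef]; nlinarith
  have ha1 : a < 1 := by simp only [hadef]; linarith
  set α : ℝ := (1 + a) / 2 with hαdef
  have hαa : a < α := by simp only [hαdef]; linarith
  have hα1 : α < 1 := by simp only [hαdef]; linarith
  have hα0 : 0 < α := by simp only [hαdef]; linarith
  -- log (g n) tends to c
  have hlogg : Tendsto (fun n => Real.log (g n)) atTop (nhds c) := by
    have h1 : Tendsto (fun n => νseq n * Real.log Γ1 + (1 - νseq n) * Real.log Γ0)
        atTop (nhds c) := by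
      exact (hνlim.mul_const _).add ((tendsto_const_nhds.sub hνlim).mul_const _)
    refine h1.congr fun n => ?_
    rw [hgdef]
    rw [Real.log_mul (Real.rpow_pos_of_pos hΓ1p _).ne' (Real.rpow_pos_of_pos hΓ0p _).ne',
      Real.log_rpow hΓ1p, Real.log_rpow hΓ0p]
  -- L n / (ρ log n) → 1
  have hLdiv : Tendsto (fun n => (L n : ℝ) / (ρ * Real.log n)) atTop (nhds 1) := by
    rw [Admissible] at hL
    have hz : ∀ᶠ n : ℕ in atTop, ρ * Real.log n ≠ 0 := by
      filter_upwards [eventually_ge_atTop 2] with n hn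
      have : (1:ℝ) < n := by exact_mod_cast Nat.lt_of_lt_of_le Nat.one_lt_two hn
      have := Real.log_pos this
      positivity
    exact (Asymptotics.isEquivalent_iff_tendsto_one hz).mp hL
  -- L n * log (g n) / log n → ρ * c
  have hmain : Tendsto (fun n => (L n : ℝ) * Real.log (g n) / Real.log n)
      atTop (nhds (ρ * c)) := by
    have h1 := (hLdiv.mul hlogg).mul_const ρ
    have h2 : (1 : ℝ) * c * ρ = ρ * c := by ring
    rw [h2] at h1
    refine h1.congr' ?_
    filter_upwards [eventually_ge_atTop 2] with n hn
    have hln : Real.log n ≠ 0 := by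
      have : (1:ℝ) < n := by exact_mod_cast Nat.lt_of_lt_of_le Nat.one_lt_two hn
      exact (Real.log_pos this).ne'
    field_simp
  -- eventually n^{-α} ≤ g n ^ L n
  have hkey : ∀ᶠ n : ℕ in atTop, (n:ℝ) ^ (-α) ≤ g n ^ L n := by
    have hev : ∀ᶠ n : ℕ in atTop, -α < (L n : ℝ) * Real.log (g n) / Real.log n :=
      hmain.eventually (eventually_gt_nhds (by simp only [hadef] at hαa ⊢; linarith))
    filter_upwards [hev, eventually_ge_atTop 2] with n hn h2
    have hln : (0:ℝ) < Real.log n := by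
      have : (1:ℝ) < n := by exact_mod_cast Nat.lt_of_lt_of_le Nat.one_lt_two h2
      exact Real.log_pos this
    have hineq : -α * Real.log n ≤ (L n : ℝ) * Real.log (g n) := by
      have := (lt_div_iff₀ hln).mp hn
      linarith
    have hx : g n ^ L n = Real.exp ((L n : ℝ) * Real.log (g n)) := by
      rw [← Real.log_pow, Real.exp_log (pow_pos (hgpos n) _)]
    have hr : (n:ℝ) ^ (-α) = Real.exp (-α * Real.log n) := by
      rw [Real.rpow_def_of_pos (by positivity : (0:ℝ) < (n:ℝ))]
      ring_nf
    rw [hx, hr]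
    exact Real.exp_le_exp.mpr hineq
  -- the atBot limit
  have hbotR : Tendsto (fun x : ℝ => Real.log x - x ^ (1 - α) / 2) atTop atBot := by
    have hio := isLittleO_log_rpow_atTop (by linarith : (0:ℝ) < 1 - α)
    have hdiv : Tendsto (fun x : ℝ => Real.log x / x ^ (1 - α)) atTop (nhds 0) :=
      hio.tendsto_div_nhds_zero
    have hx : Tendsto (fun x : ℝ => x ^ (1 - α)) atTop atTop :=
      tendsto_rpow_atTop (by linarith)
    have hmul : Tendsto (fun x : ℝ => x ^ (1 - α) * (Real.log x / x ^ (1 - α) - 1/2))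
        atTop atBot := by
      have hg : Tendsto (fun x : ℝ => Real.log x / x ^ (1 - α) - 1/2) atTop
          (nhds (0 - 1/2)) := hdiv.sub_const _
      exact hx.atTop_mul_neg (by norm_num) hg
    refine hmul.congr' ?_
    filter_upwards [eventually_gt_atTop (0:ℝ)] with x hx0
    have hxne : x ^ (1 - α) ≠ 0 := (Real.rpow_pos_of_pos hx0 _).ne'
    field_simp
  have hbot : Tendsto (fun n : ℕ => Real.log n - ((n:ℝ) - 1) * (n:ℝ) ^ (-α)) atTop atBot := by
    have hcomp : Tendsto (fun n : ℕ => Real.log n - (n:ℝ) ^ (1 - α) / 2) atTop atBot :=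
      hbotR.comp tendsto_natCast_atTop_atTop
    refine tendsto_atBot_mono' atTop ?_ hcomp
    filter_upwards [eventually_ge_atTop 2] with n hn
    have hn2 : (2:ℝ) ≤ n := by exact_mod_cast hn
    have hnp : (0:ℝ) < n := by linarith
    have hrn : (0:ℝ) < (n:ℝ) ^ (-α) := Real.rpow_pos_of_pos hnp _
    have hsplit : (n:ℝ) ^ (1 - α) = (n:ℝ) * (n:ℝ) ^ (-α) := by
      rw [show (1:ℝ) - α = 1 + (-α) by ring, Real.rpow_add hnp, Real.rpow_one]
    have : (n:ℝ) ^ (1 - α) / 2 ≤ ((n:ℝ) - 1) * (n:ℝ) ^ (-α) := by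
      rw [hsplit]; nlinarith
    linarith
  have hexp : Tendsto (fun n : ℕ => Real.exp (Real.log n - ((n:ℝ) - 1) * (n:ℝ) ^ (-α)))
      atTop (nhds 0) := Real.tendsto_exp_atBot.comp hbot
  -- squeeze
  refine squeeze_zero' ?_ ?_ hexp
  · filter_upwards with n
    have hx1 : g n ^ L n ≤ 1 := pow_le_one₀ (hgpos n).le (hgle1 n)
    have : (0:ℝ) ≤ 1 - g n ^ L n := by linarith
    positivity
  · filter_upwards [hkey, eventually_ge_atTop 2] with n hk h2
    set x := g n ^ L n with hxdef
    have hx0 : 0 < x := pow_pos (hgpos n) _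
    have hx1 : x ≤ 1 := pow_le_one₀ (hgpos n).le (hgle1 n)
    have hnp : (0:ℝ) < n := by
      have : (2:ℝ) ≤ n := by exact_mod_cast h2
      linarith
    have hcast : ((n - 1 : ℕ) : ℝ) = (n:ℝ) - 1 := by
      have : 1 ≤ n := le_trans (by norm_num) h2
      push_cast [this]
      ring
    have hstep1 : (1 - x) ^ (n - 1) ≤ Real.exp (-x) ^ (n - 1) := by
      apply pow_le_pow_left₀ (by linarith)
      have := Real.add_one_le_exp (-x)
      linarith
    have hstep2 : Real.exp (-x) ^ (n - 1) = Real.exp (((n-1:ℕ):ℝ) * (-x)) := by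
      rw [← Real.exp_nat_mul]
    have hb : (n:ℝ) * (1 - x) ^ (n - 1) ≤ (n:ℝ) * Real.exp (((n:ℝ) - 1) * (-x)) := by
      rw [← hcast]
      calc (n:ℝ) * (1 - x) ^ (n - 1) ≤ (n:ℝ) * Real.exp (-x) ^ (n - 1) := by
            apply mul_le_mul_of_nonneg_left hstep1 hnp.le
        _ = (n:ℝ) * Real.exp (((n-1:ℕ):ℝ) * (-x)) := by rw [hstep2]
    calc (n:ℝ) * (1 - x) ^ (n - 1)
        ≤ (n:ℝ) * Real.exp (((n:ℝ) - 1) * (-x)) := hb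
      _ = Real.exp (Real.log n + ((n:ℝ) - 1) * (-x)) := by
          rw [Real.exp_add, Real.exp_log hnp]
      _ ≤ Real.exp (Real.log n - ((n:ℝ) - 1) * (n:ℝ) ^ (-α)) := by
          apply Real.exp_le_exp.mpr
          have hn1 : (0:ℝ) ≤ (n:ℝ) - 1 := by
            have : (2:ℝ) ≤ n := by exact_mod_cast h2
            linarith
          nlinarith [mul_le_mul_of_nonneg_left hk hn1]
end

section
/- Existence and uniqueness of the root ν⋆: Let 0 < μ < 1 and ρ > 0 with 1 + ρ ln(1−μ) < 0. Then the equation 1 + ρ ln G(ν, μ) = 0 has exactly one solution ν⋆ in the open interval (0, μ). Moreover, a second root located in the interval (μ, 1] exists if and only if 1 + ρ ln μ ≤ 0. -/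
open MeasureTheory Filter

/-!
On `[0, 1]`, `log G(ν, μ) = ν log μ + (1 - ν) log (1 - μ) + H(ν)` with `H` the binary entropy,
i.e. `-KL(Ber ν ‖ Ber μ)`. Its derivative
`log (μ / (1 - μ)) - log (ν / (1 - ν))` changes sign only at `ν = μ`, so
`ν ↦ 1 + ρ log G(ν, μ)` increases strictly from `1 + ρ log (1 - μ) < 0` to `1` on `[0, μ]`
and then decreases strictly to `1 + ρ log μ` on `[μ, 1]`. The intermediate value theorem
finishes both claims.
-/

open Real Set

section Monotone

variable {α δ : Type*} [ConditionallyCompleteLinearOrder α] [TopologicalSpace α] [OrderTopology α]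
  [DenselyOrdered α] [LinearOrder δ] [TopologicalSpace δ] [OrderClosedTopology δ]
  {f : α → δ} {a b : α} {c : δ}

theorem StrictMonoOn.existsUnique_mem_Ioo_eq (hab : a ≤ b) (hf : ContinuousOn f (Icc a b))
    (hmono : StrictMonoOn f (Icc a b)) (hc : c ∈ Ioo (f a) (f b)) :
    ∃! x, x ∈ Ioo a b ∧ f x = c := by
  obtain ⟨x, hx, rfl⟩ := intermediate_value_Ioo hab hf hc
  exact ⟨x, ⟨hx, rfl⟩, fun y ⟨hy, hyx⟩ =>
    hmono.injOn (Ioo_subset_Icc_self hy) (Ioo_subset_Icc_self hx) hyx⟩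

theorem StrictAntiOn.exists_mem_Ioc_eq_iff (hab : a ≤ b) (hf : ContinuousOn f (Icc a b))
    (hanti : StrictAntiOn f (Icc a b)) (ha : c < f a) :
    (∃ x ∈ Ioc a b, f x = c) ↔ f b ≤ c := by
  constructor
  · rintro ⟨x, hx, rfl⟩
    exact hanti.antitoneOn (Ioc_subset_Icc_self hx) (right_mem_Icc.2 hab) hx.2
  · intro hb
    obtain ⟨x, hx, rfl⟩ := intermediate_value_Icc' hab hf ⟨hb, ha.le⟩
    have hxa : x ≠ a := by rintro rfl; exact ha.false
    exact ⟨x, ⟨lt_of_le_of_ne hx.1 hxa.symm, hx.2⟩, rfl⟩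

end Monotone

/-- `ν ↦ -KL(Ber ν ‖ Ber μ)`. -/
noncomputable def negBinKL (μ ν : ℝ) : ℝ :=
  ν * log μ + (1 - ν) * log (1 - μ) + binEntropy ν

theorem log_Gfun_eq_negBinKL {μ ν : ℝ} (hμ : μ ∈ Ioo 0 1) (hν : ν ∈ Icc 0 1) :
    log (Gfun ν μ) = negBinKL μ ν := by
  obtain ⟨hμ0, hμ1⟩ := hμ
  rcases eq_or_lt_of_le hν.1 with rfl | hν0
  · simp [Gfun, negBinKL]
  rcases eq_or_lt_of_le hν.2 with rfl | hν1
  · simp [Gfun, negBinKL]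
  have hμ1' : 0 < 1 - μ := sub_pos.2 hμ1
  have hν1' : 0 < 1 - ν := sub_pos.2 hν1
  rw [Gfun, log_mul (by positivity) (by positivity), log_rpow (by positivity),
    log_rpow (by positivity), log_div hμ0.ne' hν0.ne', log_div hμ1'.ne' hν1'.ne', negBinKL,
    binEntropy, log_inv, log_inv]
  ring

@[fun_prop] theorem continuous_negBinKL (μ : ℝ) : Continuous (negBinKL μ) := by
  unfold negBinKL
  fun_prop

theorem hasDerivAt_negBinKL (μ : ℝ) {ν : ℝ} (hν : ν ∈ Ioo 0 1) :
    HasDerivAt (negBinKL μ) (log μ - log (1 - μ) + (log (1 - ν) - log ν)) ν := by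
  have hlin : HasDerivAt (fun x : ℝ => x * log μ + (1 - x) * log (1 - μ))
      (log μ - log (1 - μ)) ν := by
    have := ((hasDerivAt_id' ν).mul_const (log μ)).add
      (((hasDerivAt_id' ν).const_sub 1).mul_const (log (1 - μ)))
    exact this.congr_deriv (by ring)
  exact hlin.add (hasDerivAt_binEntropy hν.1.ne' hν.2.ne)

theorem negBinKL_strictMonoOn {μ : ℝ} (hμ : μ < 1) : StrictMonoOn (negBinKL μ) (Icc 0 μ) := by
  refine strictMonoOn_of_deriv_pos (convex_Icc 0 μ) (continuous_negBinKL μ).continuousOn ?_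
  rw [interior_Icc]
  intro ν hν
  rw [(hasDerivAt_negBinKL μ ⟨hν.1, hν.2.trans hμ⟩).deriv]
  have h1 := log_lt_log hν.1 hν.2
  have h2 := log_lt_log (sub_pos.2 hμ) (sub_lt_sub_left hν.2 1)
  linarith

theorem negBinKL_strictAntiOn {μ : ℝ} (hμ : 0 < μ) : StrictAntiOn (negBinKL μ) (Icc μ 1) := by
  refine strictAntiOn_of_deriv_neg (convex_Icc μ 1) (continuous_negBinKL μ).continuousOn ?_
  rw [interior_Icc]
  intro ν hν
  rw [(hasDerivAt_negBinKL μ ⟨hμ.trans hν.1, hν.2⟩).deriv]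
  have h1 := log_lt_log hμ hν.1
  have h2 := log_lt_log (sub_pos.2 hν.2) (sub_lt_sub_left hν.1 1)
  linarith

@[simp] theorem negBinKL_zero (μ : ℝ) : negBinKL μ 0 = log (1 - μ) := by simp [negBinKL]

@[simp] theorem negBinKL_self (μ : ℝ) : negBinKL μ μ = 0 := by
  simp only [negBinKL, binEntropy, log_inv]
  ring

@[simp] theorem negBinKL_one (μ : ℝ) : negBinKL μ 1 = log μ := by simp [negBinKL]

theorem root_nu_star_exists_unique
    (μ ρ : ℝ) (hμ : μ ∈ Set.Ioo (0:ℝ) 1) (hρ : 0 < ρ)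
    (h : 1 + ρ * Real.log (1 - μ) < 0) :
    (∃! ν : ℝ, ν ∈ Set.Ioo 0 μ ∧ 1 + ρ * Real.log (Gfun ν μ) = 0) ∧
    ((∃ ν ∈ Set.Ioc μ 1, 1 + ρ * Real.log (Gfun ν μ) = 0) ↔ 1 + ρ * Real.log μ ≤ 0) := by
  set g : ℝ → ℝ := fun ν => 1 + ρ * negBinKL μ ν
  have hG : ∀ ν ∈ Icc (0:ℝ) 1, 1 + ρ * log (Gfun ν μ) = g ν := fun ν hν => by
    rw [log_Gfun_eq_negBinKL hμ hν]
  have hg : Continuous g := by fun_prop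
  have haffine : StrictMono fun y : ℝ => 1 + ρ * y := (strictMono_mul_left_of_pos hρ).const_add 1
  constructor
  · have hroot := (haffine.comp_strictMonoOn (negBinKL_strictMonoOn hμ.2)).existsUnique_mem_Ioo_eq
      hμ.1.le hg.continuousOn (c := 0) ⟨by simpa [g] using h, by simp [g]⟩
    refine (existsUnique_congr fun ν => and_congr_right fun hν => ?_).1 hroot
    rw [hG ν ⟨hν.1.le, hν.2.le.trans hμ.2.le⟩]
  · have hsecond := (haffine.comp_strictAntiOn (negBinKL_strictAntiOn hμ.1)).exists_mem_Ioc_eq_iff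
      hμ.2.le hg.continuousOn (c := 0) (by simp [g])
    simp only [g, negBinKL_one] at hsecond
    rw [← hsecond]
    refine exists_congr fun ν => and_congr_right fun hν => ?_
    rw [hG ν ⟨hμ.1.le.trans hν.1.le, hν.2⟩]
end
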